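/- arXiv:2405.20977 — 2 statements merged into one kernel-verified Lean document; each statement's English description precedes it below -/
import Mathlib

section
/- Let a > 0, δ > 0, p ≥ 1, and let S be a real number. If E = δ·a·(1 + |a·S|^p)^(−1/p)·S, then |E| < δ and a·S = (1 − |E/δ|^p)^(−1/p)·(E/δ). -/
/-!
In normalized variables `x = a S` and `y = E / δ` the relation reads `y = (1 + |x|^p)^(-1/p) x`.
Then `|y|^p = |x|^p / (1 + |x|^p) < 1` and `1 - |y|^p = (1 + |x|^p)⁻¹`, so
`(1 - |y|^p)^(-1/p) = (1 + |x|^p)^(1/p)` undoes the factor in front of `x`.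
-/

open Real

namespace StrainLimiting

noncomputable def strain (p x : ℝ) : ℝ := (1 + |x| ^ p) ^ (-(1 / p)) * x

variable {p : ℝ}

lemma abs_strain_rpow (hp : 0 < p) (x : ℝ) :
    |strain p x| ^ p = |x| ^ p / (1 + |x| ^ p) := by
  have hpos : 0 < 1 + |x| ^ p := by positivity
  have hfactor : ((1 + |x| ^ p) ^ (-(1 / p))) ^ p = (1 + |x| ^ p)⁻¹ := by
    rw [← rpow_mul hpos.le, show -(1 / p) * p = -1 by field_simp, rpow_neg_one]
  rw [strain, abs_mul, abs_of_pos (rpow_pos_of_pos hpos _),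
    mul_rpow (rpow_pos_of_pos hpos _).le (abs_nonneg x), hfactor, inv_mul_eq_div]

lemma one_sub_abs_strain_rpow (hp : 0 < p) (x : ℝ) :
    1 - |strain p x| ^ p = (1 + |x| ^ p)⁻¹ := by
  have hpos : 0 < 1 + |x| ^ p := by positivity
  rw [abs_strain_rpow hp]
  field_simp
  ring

lemma abs_strain_lt_one (hp : 0 < p) (x : ℝ) : |strain p x| < 1 := by
  have hlt : |strain p x| ^ p < 1 ^ p := by
    rw [one_rpow, abs_strain_rpow hp, div_lt_one (by positivity)]
    linarith
  exact (rpow_lt_rpow_iff (abs_nonneg _) zero_le_one hp).mp hlt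

theorem strain_inversion (hp : 0 < p) (x : ℝ) :
    (1 - |strain p x| ^ p) ^ (-(1 / p)) * strain p x = x := by
  have hpos : 0 < 1 + |x| ^ p := by positivity
  rw [one_sub_abs_strain_rpow hp, inv_rpow hpos.le, rpow_neg hpos.le, inv_inv, strain,
    rpow_neg hpos.le, ← mul_assoc, mul_inv_cancel₀ (rpow_pos_of_pos hpos _).ne', one_mul]

end StrainLimiting

open StrainLimiting in
theorem stmt_2_general (a δ p S E : ℝ) (hδ : 0 < δ) (hp : 1 ≤ p)
    (hE : E = δ * a * (1 + |a * S| ^ p) ^ (-(1 / p)) * S) :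
    |E| < δ ∧ a * S = (1 - |E / δ| ^ p) ^ (-(1 / p)) * (E / δ) := by
  have hp0 : 0 < p := by linarith
  have hnormalized : E / δ = strain p (a * S) := by
    rw [hE, strain]
    field_simp
  refine ⟨?_, ?_⟩
  · have h := abs_strain_lt_one hp0 (a * S)
    rwa [← hnormalized, abs_div, abs_of_pos hδ, div_lt_one hδ] at h
  · rw [hnormalized, strain_inversion hp0]

theorem stmt_2 (a δ p S E : ℝ) (ha : 0 < a) (hδ : 0 < δ) (hp : 1 ≤ p)
    (hE : E = δ * a * (1 + |a * S| ^ p) ^ (-(1 / p)) * S) :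
    |E| < δ ∧ a * S = (1 - |E / δ| ^ p) ^ (-(1 / p)) * (E / δ) :=
  stmt_2_general a δ p S E hδ hp hE
end

section
/- Let C₀, C₂, δ > 0 with 2C₀δ < 1. Let E be a real symmetric 3×3 matrix with ‖E‖ ≤ C₀δ, let R be a 3×3 orthogonal matrix with ‖R − I‖ ≤ C₂δ, and set F = R·(I+2E)^{1/2} (positive-definite square root). Then ‖F − I‖ ≤ [(3 + 2√3·C₀δ)^{1/2}·C₂ + (1 − 2C₀δ)^(−1/2)·C₀]·δ, where ‖·‖ is the Frobenius norm. -/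
open Matrix

noncomputable def frob (A : Matrix (Fin 3) (Fin 3) ℝ) : ℝ :=
  Real.sqrt (Matrix.trace (A * Aᵀ))

section

open scoped ComplexOrder

/-- The positive semidefinite square root, as `Matrix.PosSemidef.sqrt` was defined in Mathlib
(December 2024); that definition has since been removed from Mathlib. -/
noncomputable def Matrix.PosSemidef.sqrt {n 𝕜 : Type*} [Fintype n] [RCLike 𝕜] [DecidableEq n]
    {A : Matrix n n 𝕜} (hA : A.PosSemidef) : Matrix n n 𝕜 :=
  hA.1.eigenvectorUnitary.1 * diagonal ((↑) ∘ (√·) ∘ hA.1.eigenvalues) *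
    (star hA.1.eigenvectorUnitary : Matrix n n 𝕜)

end

/-!
Write `F - 1 = (R - 1) * √A + (√A - 1)` with `A = 1 + 2E`. In an orthonormal eigenbasis of `A`
the Frobenius norm becomes the ℓ² norm of the eigenvalues `λᵢ = 1 + 2eᵢ`. Hence
`‖√A‖² = ∑ λᵢ ≤ 3 + √3 ‖A - 1‖` by Cauchy–Schwarz, and every `λᵢ ≥ 1 - ‖A - 1‖ =: b`, so that
`|√λᵢ - 1| = |λᵢ - 1| / (√λᵢ + 1) ≤ |λᵢ - 1| / (2√b)`.
-/

attribute [local instance] Matrix.frobeniusNormedAddCommGroup Matrix.frobeniusNormedSpace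
  Matrix.frobeniusNormedRing

namespace Matrix

variable {m n : Type*} [Fintype m] [Fintype n]

theorem frobenius_norm_sq_eq_trace (A : Matrix m n ℝ) : ‖A‖ ^ 2 = trace (A * Aᵀ) := by
  rw [frobenius_norm_def, ← Real.sqrt_eq_rpow, Real.sq_sqrt (by positivity)]
  simp [trace, mul_apply, sq]

theorem frobenius_norm_unitary_conj [DecidableEq n] {U : Matrix n n ℝ}
    (hU : U ∈ unitaryGroup n ℝ) (B : Matrix n n ℝ) : ‖U * B * star U‖ = ‖B‖ := by
  have hUU : Uᵀ * U = 1 := by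
    rw [← conjTranspose_eq_transpose_of_trivial, ← star_eq_conjTranspose]
    exact Unitary.star_mul_self_of_mem hU
  rw [← sq_eq_sq₀ (norm_nonneg _) (norm_nonneg _), frobenius_norm_sq_eq_trace,
    frobenius_norm_sq_eq_trace, star_eq_conjTranspose, conjTranspose_eq_transpose_of_trivial]
  calc trace (U * B * Uᵀ * (U * B * Uᵀ)ᵀ) = trace (U * (B * (Uᵀ * U) * Bᵀ) * Uᵀ) := by
        simp only [transpose_mul, transpose_transpose, Matrix.mul_assoc]
    _ = trace (B * Bᵀ) := by
        rw [hUU, Matrix.mul_one, trace_mul_cycle, ← Matrix.mul_assoc, hUU, Matrix.one_mul]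

theorem frobenius_norm_diagonal_eq_sqrt [DecidableEq n] (d : n → ℝ) :
    ‖diagonal d‖ = √(∑ i, d i ^ 2) := by
  simp [frobenius_norm_diagonal, EuclideanSpace.norm_eq]

theorem unitary_conj_diagonal_sub_one [DecidableEq n] {U : Matrix n n ℝ}
    (hU : U ∈ unitaryGroup n ℝ) (d : n → ℝ) :
    U * diagonal d * star U - 1 = U * diagonal (d - 1) * star U := by
  have : diagonal (d - 1) = diagonal d - 1 := by rw [← diagonal_one, diagonal_sub]; rfl
  rw [this, Matrix.mul_sub, Matrix.sub_mul, Matrix.mul_one, Unitary.mul_star_self_of_mem hU]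

end Matrix

theorem Real.abs_sqrt_sub_one_le {b x : ℝ} (hb : 0 < b) (hb1 : b ≤ 1) (hx : b ≤ x) :
    |√x - 1| ≤ |x - 1| / (2 * √b) := by
  have hsb : √b ≤ √x := Real.sqrt_le_sqrt hx
  have hb1' : √b ≤ 1 := Real.sqrt_le_one.mpr hb1
  have hfactor : |x - 1| = |√x - 1| * (√x + 1) := by
    have hx1 : x - 1 = (√x - 1) * (√x + 1) := by
      nlinarith [Real.sq_sqrt (hb.le.trans hx)]
    rw [hx1, abs_mul, abs_of_pos (by positivity : 0 < √x + 1)]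
  rw [le_div_iff₀ (by positivity), hfactor]
  exact mul_le_mul_of_nonneg_left (by linarith) (abs_nonneg _)

namespace Matrix.PosSemidef

variable {n : Type*} [Fintype n] [DecidableEq n] {A : Matrix n n ℝ} (hA : A.PosSemidef)

theorem eq_unitary_conj_diagonal :
    A = (hA.1.eigenvectorUnitary : Matrix n n ℝ) * diagonal hA.1.eigenvalues *
      star (hA.1.eigenvectorUnitary : Matrix n n ℝ) := by
  conv_lhs => rw [hA.1.spectral_theorem, Unitary.conjStarAlgAut_apply]
  rfl

theorem sqrt_eq_unitary_conj_diagonal :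
    hA.sqrt = (hA.1.eigenvectorUnitary : Matrix n n ℝ) *
      diagonal (fun i => √(hA.1.eigenvalues i)) * star (hA.1.eigenvectorUnitary : Matrix n n ℝ) :=
  rfl

theorem norm_sub_one_eq : ‖A - 1‖ = √(∑ i, (hA.1.eigenvalues i - 1) ^ 2) := by
  conv_lhs => rw [hA.eq_unitary_conj_diagonal]
  rw [unitary_conj_diagonal_sub_one hA.1.eigenvectorUnitary.2,
    frobenius_norm_unitary_conj hA.1.eigenvectorUnitary.2, frobenius_norm_diagonal_eq_sqrt]
  rfl

theorem norm_sqrt_sub_one_eq : ‖hA.sqrt - 1‖ = √(∑ i, (√(hA.1.eigenvalues i) - 1) ^ 2) := by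
  rw [sqrt_eq_unitary_conj_diagonal, unitary_conj_diagonal_sub_one hA.1.eigenvectorUnitary.2,
    frobenius_norm_unitary_conj hA.1.eigenvectorUnitary.2, frobenius_norm_diagonal_eq_sqrt]
  rfl

theorem norm_sqrt_eq : ‖hA.sqrt‖ = √(∑ i, hA.1.eigenvalues i) := by
  rw [sqrt_eq_unitary_conj_diagonal, frobenius_norm_unitary_conj hA.1.eigenvectorUnitary.2,
    frobenius_norm_diagonal_eq_sqrt]
  exact congrArg Real.sqrt
    (Finset.sum_congr rfl fun i _ => Real.sq_sqrt (hA.eigenvalues_nonneg i))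

theorem abs_eigenvalues_sub_one_le (i : n) : |hA.1.eigenvalues i - 1| ≤ ‖A - 1‖ := by
  rw [hA.norm_sub_one_eq, ← Real.sqrt_sq_eq_abs]
  exact Real.sqrt_le_sqrt
    (Finset.single_le_sum (fun j _ => sq_nonneg (hA.1.eigenvalues j - 1)) (Finset.mem_univ i))

theorem norm_sqrt_le : ‖hA.sqrt‖ ≤ √(Fintype.card n + √(Fintype.card n) * ‖A - 1‖) := by
  have hcs := Real.sum_mul_le_sqrt_mul_sqrt Finset.univ (fun _ => (1 : ℝ))
    (fun i => hA.1.eigenvalues i - 1)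
  simp only [one_pow, Finset.sum_const, Finset.card_univ, nsmul_eq_mul, mul_one, one_mul] at hcs
  rw [hA.norm_sqrt_eq, hA.norm_sub_one_eq]
  refine Real.sqrt_le_sqrt ?_
  calc ∑ i, hA.1.eigenvalues i = Fintype.card n + ∑ i, (hA.1.eigenvalues i - 1) := by
        simp [Finset.sum_sub_distrib]
    _ ≤ _ := by gcongr

theorem norm_sqrt_sub_one_le {b : ℝ} (hb : 0 < b) (hAb : ‖A - 1‖ ≤ 1 - b) :
    ‖hA.sqrt - 1‖ ≤ ‖A - 1‖ / (2 * √b) := by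
  have hb1 : b ≤ 1 := by linarith [norm_nonneg (A - 1)]
  have heig (i : n) : b ≤ hA.1.eigenvalues i := by
    linarith [neg_abs_le (hA.1.eigenvalues i - 1), hA.abs_eigenvalues_sub_one_le i]
  rw [hA.norm_sqrt_sub_one_eq, hA.norm_sub_one_eq, ← Real.sqrt_sq (by positivity : 0 ≤ 2 * √b),
    ← Real.sqrt_div' _ (by positivity)]
  refine Real.sqrt_le_sqrt ?_
  rw [Finset.sum_div]
  refine Finset.sum_le_sum fun i _ => ?_
  rw [← div_pow, sq_le_sq, abs_div, abs_of_pos (by positivity : 0 < 2 * √b)]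
  exact Real.abs_sqrt_sub_one_le hb hb1 (heig i)

end Matrix.PosSemidef

theorem frob_eq_norm (A : Matrix (Fin 3) (Fin 3) ℝ) : frob A = ‖A‖ := by
  rw [frob, ← frobenius_norm_sq_eq_trace, Real.sqrt_sq (norm_nonneg _)]

theorem stmt_10_general (C₀ C₂ δ : ℝ)
    (hsmall : 2 * C₀ * δ < 1)
    (E : Matrix (Fin 3) (Fin 3) ℝ) (hE : frob E ≤ C₀ * δ)
    (hpsd : ((1 : Matrix (Fin 3) (Fin 3) ℝ) + (2 : ℝ) • E).PosSemidef)
    (R : Matrix (Fin 3) (Fin 3) ℝ) (hRI : frob (R - 1) ≤ C₂ * δ)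
    (F : Matrix (Fin 3) (Fin 3) ℝ) (hF : F = R * hpsd.sqrt) :
    frob (F - 1) ≤
      (Real.sqrt (3 + 2 * Real.sqrt 3 * (C₀ * δ)) * C₂
        + (1 - 2 * C₀ * δ) ^ (-(1 / 2) : ℝ) * C₀) * δ := by
  rw [frob_eq_norm] at hE hRI ⊢
  have hb : 0 < 1 - 2 * C₀ * δ := by linarith
  have hnormA : ‖1 + (2 : ℝ) • E - 1‖ = 2 * ‖E‖ := by
    rw [add_sub_cancel_left, norm_smul, Real.norm_two]
  have hS : ‖hpsd.sqrt‖ ≤ √(3 + 2 * √3 * (C₀ * δ)) := by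
    refine hpsd.norm_sqrt_le.trans (Real.sqrt_le_sqrt ?_)
    rw [hnormA, Fintype.card_fin]
    push_cast
    nlinarith [Real.sqrt_nonneg 3]
  have hS1 : ‖hpsd.sqrt - 1‖ ≤ (1 - 2 * C₀ * δ) ^ (-(1 / 2) : ℝ) * (C₀ * δ) := by
    refine (hpsd.norm_sqrt_sub_one_le hb (by linarith)).trans ?_
    rw [hnormA, Real.rpow_neg hb.le, ← Real.sqrt_eq_rpow, mul_div_mul_left _ _ two_ne_zero,
      div_eq_inv_mul]
    gcongr
  calc ‖F - 1‖ = ‖(R - 1) * hpsd.sqrt + (hpsd.sqrt - 1)‖ := by rw [hF]; noncomm_ring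
    _ ≤ ‖R - 1‖ * ‖hpsd.sqrt‖ + ‖hpsd.sqrt - 1‖ := norm_add_le_of_le (norm_mul_le _ _) le_rfl
    _ ≤ C₂ * δ * √(3 + 2 * √3 * (C₀ * δ)) + (1 - 2 * C₀ * δ) ^ (-(1 / 2) : ℝ) * (C₀ * δ) :=
        add_le_add (mul_le_mul hRI hS (norm_nonneg _) ((norm_nonneg _).trans hRI)) hS1
    _ = _ := by ring

theorem stmt_10 (C₀ C₂ δ : ℝ) (hC₀ : 0 < C₀) (hC₂ : 0 < C₂) (hδ : 0 < δ)
    (hsmall : 2 * C₀ * δ < 1)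
    (E : Matrix (Fin 3) (Fin 3) ℝ) (hsym : E.IsSymm) (hE : frob E ≤ C₀ * δ)
    (hpsd : ((1 : Matrix (Fin 3) (Fin 3) ℝ) + (2 : ℝ) • E).PosSemidef)
    (R : Matrix (Fin 3) (Fin 3) ℝ) (hR : R * Rᵀ = 1) (hRI : frob (R - 1) ≤ C₂ * δ)
    (F : Matrix (Fin 3) (Fin 3) ℝ) (hF : F = R * hpsd.sqrt) :
    frob (F - 1) ≤
      (Real.sqrt (3 + 2 * Real.sqrt 3 * (C₀ * δ)) * C₂
        + (1 - 2 * C₀ * δ) ^ (-(1 / 2) : ℝ) * C₀) * δ :=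
  stmt_10_general C₀ C₂ δ hsmall E hE hpsd R hRI F hF
end
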